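/- arXiv:math/0308196 — 2 statements merged into one kernel-verified Lean document; each statement's English description precedes it below -/
import Mathlib

section
/- Let V be a real vector space with a symmetric bilinear form and let e_1,...,e_n satisfy: (e_i,e_j) ≥ 0 for i≠j, and for every nonempty S ⊆ {1,...,n} and j ∈ S, (Σ_{i∈S} e_i, e_j) < 0. Then the bilinear form is negative definite on the cone Σ_i ℝ_{≥0} e_i: that is, every x = Σ_i c_i e_i with c_i ≥ 0 and x ≠ 0 satisfies (x, x) < 0. -/
/-!
Let `u_T = ∑_{i ∈ T} e i`. For nonnegative coefficients `c` on `T` with minimum `m`, attained at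
`j`, write `∑ c i • e i = m • u_T + y` with `y = ∑ (c i - m) • e i`, a nonnegative combination
supported on `T.erase j`. The hypothesis gives `B u_T (e i) < 0` for `i ∈ T`, hence `B u_T u_T < 0`
and `B u_T y ≤ 0`, so `B x x = m² B u_T u_T + 2m B u_T y + B y y ≤ m² B u_T u_T + B y y`.
Induction on `T` gives `B x x ≤ 0`, and strictness when all coefficients are positive (`m > 0`).
-/

open Finset

section

variable {V ι : Type*} [AddCommGroup V] [Module ℝ V] (B : V →ₗ[ℝ] V →ₗ[ℝ] ℝ)

theorem apply_smul_add_self_of_symm (hsymm : ∀ x y, B x y = B y x) (m : ℝ) (u y : V) :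
    B (m • u + y) (m • u + y) = m ^ 2 * B u u + 2 * m * B u y + B y y := by
  simp only [map_add, map_smul, LinearMap.add_apply, LinearMap.smul_apply, smul_eq_mul,
    hsymm y u]
  ring

theorem sum_smul_eq_smul_sum_add_sum_sub_smul (T : Finset ι) (c : ι → ℝ) (e : ι → V) (m : ℝ) :
    ∑ i ∈ T, c i • e i = m • ∑ i ∈ T, e i + ∑ i ∈ T, (c i - m) • e i := by
  simp only [sub_smul, sum_sub_distrib, smul_sum]
  abel

variable {B} {e : ι → V}
  (hS : ∀ S : Finset ι, S.Nonempty → ∀ j ∈ S, B (∑ i ∈ S, e i) (e j) < 0)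
include hS

theorem apply_sum_self_neg {T : Finset ι} (hT : T.Nonempty) :
    B (∑ i ∈ T, e i) (∑ i ∈ T, e i) < 0 := by
  rw [map_sum]
  exact sum_neg (hS T hT) hT

theorem apply_sum_sum_smul_nonpos {T : Finset ι} (hT : T.Nonempty) {d : ι → ℝ}
    (hd : ∀ i ∈ T, 0 ≤ d i) : B (∑ i ∈ T, e i) (∑ i ∈ T, d i • e i) ≤ 0 := by
  rw [map_sum (B (∑ i ∈ T, e i))]
  simp only [map_smul, smul_eq_mul]
  exact sum_nonpos fun i hi => mul_nonpos_of_nonneg_of_nonpos (hd i hi) (hS T hT i hi).le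

theorem apply_sum_smul_self_le (hsymm : ∀ x y, B x y = B y x) {T : Finset ι} (hT : T.Nonempty)
    {c : ι → ℝ} {m : ℝ} (hm : 0 ≤ m) (hmc : ∀ i ∈ T, m ≤ c i)
    (hy : B (∑ i ∈ T, (c i - m) • e i) (∑ i ∈ T, (c i - m) • e i) ≤ 0) :
    B (∑ i ∈ T, c i • e i) (∑ i ∈ T, c i • e i) ≤ m ^ 2 * B (∑ i ∈ T, e i) (∑ i ∈ T, e i) := by
  have huy := apply_sum_sum_smul_nonpos hS hT fun i hi => sub_nonneg.2 (hmc i hi)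
  rw [sum_smul_eq_smul_sum_add_sum_sub_smul T c e m, apply_smul_add_self_of_symm B hsymm]
  nlinarith

theorem apply_sum_smul_self_nonpos (hsymm : ∀ x y, B x y = B y x) (T : Finset ι) {c : ι → ℝ}
    (hc : ∀ i ∈ T, 0 ≤ c i) : B (∑ i ∈ T, c i • e i) (∑ i ∈ T, c i • e i) ≤ 0 := by
  classical
  induction T using Finset.strongInduction generalizing c with
  | H T ih =>
  rcases T.eq_empty_or_nonempty with rfl | hT
  · simp
  obtain ⟨j, hjT, hj⟩ := T.exists_min_image c hT
  have hy : B (∑ i ∈ T, (c i - c j) • e i) (∑ i ∈ T, (c i - c j) • e i) ≤ 0 := by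
    rw [← sum_erase T (f := fun i => (c i - c j) • e i) (a := j) (by simp)]
    exact ih _ (erase_ssubset hjT) fun i hi => sub_nonneg.2 (hj i (mem_of_mem_erase hi))
  calc _ ≤ c j ^ 2 * B (∑ i ∈ T, e i) (∑ i ∈ T, e i) :=
        apply_sum_smul_self_le hS hsymm hT (hc j hjT) hj hy
    _ ≤ 0 := mul_nonpos_of_nonneg_of_nonpos (sq_nonneg _) (apply_sum_self_neg hS hT).le

theorem apply_sum_smul_self_neg (hsymm : ∀ x y, B x y = B y x) {T : Finset ι} (hT : T.Nonempty)
    {c : ι → ℝ} (hc : ∀ i ∈ T, 0 < c i) :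
    B (∑ i ∈ T, c i • e i) (∑ i ∈ T, c i • e i) < 0 := by
  obtain ⟨j, hjT, hj⟩ := T.exists_min_image c hT
  have hy := apply_sum_smul_self_nonpos hS hsymm T fun i hi => sub_nonneg.2 (hj i hi)
  calc _ ≤ c j ^ 2 * B (∑ i ∈ T, e i) (∑ i ∈ T, e i) :=
        apply_sum_smul_self_le hS hsymm hT (hc j hjT).le hj hy
    _ < 0 := mul_neg_of_pos_of_neg (pow_pos (hc j hjT) 2) (apply_sum_self_neg hS hT)

end

theorem stmt_3_general {V : Type*} [AddCommGroup V] [Module ℝ V]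
    (B : V →ₗ[ℝ] V →ₗ[ℝ] ℝ) (hsymm : ∀ x y, B x y = B y x)
    {n : ℕ} (e : Fin n → V)
    (hS : ∀ S : Finset (Fin n), S.Nonempty → ∀ j ∈ S, B (∑ i ∈ S, e i) (e j) < 0) :
    ∀ c : Fin n → ℝ, (∀ i, 0 ≤ c i) → (∑ i, c i • e i) ≠ 0 →
      B (∑ i, c i • e i) (∑ i, c i • e i) < 0 := by
  intro c hc hx
  classical
  set T := univ.filter fun i => c i • e i ≠ 0
  have hT : T.Nonempty := filter_nonempty_iff.2 (exists_ne_zero_of_sum_ne_zero hx)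
  have hcT : ∀ i ∈ T, 0 < c i := fun i hi =>
    (hc i).lt_of_ne' (left_ne_zero_of_smul (mem_filter.1 hi).2)
  rw [← sum_filter_ne_zero]
  exact apply_sum_smul_self_neg hS hsymm hT hcT

/-- Under the subset-negativity hypothesis, the symmetric bilinear
form is negative definite on the cone `∑ ℝ≥0 e i`: every nonzero nonnegative
combination has negative square. -/
theorem stmt_3 {V : Type*} [AddCommGroup V] [Module ℝ V]
    (B : V →ₗ[ℝ] V →ₗ[ℝ] ℝ) (hsymm : ∀ x y, B x y = B y x)
    {n : ℕ} (e : Fin n → V)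
    (hij : ∀ i j, i ≠ j → 0 ≤ B (e i) (e j))
    (hS : ∀ S : Finset (Fin n), S.Nonempty → ∀ j ∈ S, B (∑ i ∈ S, e i) (e j) < 0) :
    ∀ c : Fin n → ℝ, (∀ i, 0 ≤ c i) → (∑ i, c i • e i) ≠ 0 →
      B (∑ i, c i • e i) (∑ i, c i • e i) < 0 :=
  stmt_3_general B hsymm e hS
end

section
/- Let V be a real vector space with a symmetric bilinear form that is negative definite on the cone generated by vectors e_1,...,e_n (i.e., every nonzero nonnegative combination x = Σ c_i e_i with c_i ≥ 0 satisfies (x,x) < 0), and suppose (e_i, e_j) ≥ 0 for i ≠ j. Then e_1,...,e_n are linearly independent. -/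
/-!
Write a vanishing combination `∑ cᵢ eᵢ = 0` as `∑ c⁺ᵢ eᵢ = ∑ c⁻ᵢ eᵢ =: x`. Since `c⁺` and `c⁻`
have disjoint supports, expanding `B x x = B (∑ c⁺ᵢ eᵢ) (∑ c⁻ⱼ eⱼ)` only involves the
off-diagonal values `B eᵢ eⱼ ≥ 0`, so `B x x ≥ 0`. Negativity on the cone then forces
`c⁺ = c⁻ = 0`.
-/

open Finset

lemma Real.posPart_mul_negPart (a : ℝ) : a⁺ * a⁻ = 0 := by
  rcases le_total a 0 with ha | ha
  · rw [posPart_eq_zero.2 ha, zero_mul]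
  · rw [negPart_eq_zero.2 ha, mul_zero]

section

variable {ι V : Type*} [Fintype ι] [AddCommGroup V] [Module ℝ V]
  (B : V →ₗ[ℝ] V →ₗ[ℝ] ℝ) {e : ι → V}

lemma apply_sum_smul_nonneg_of_mul_eq_zero
    (hij : ∀ i j, i ≠ j → 0 ≤ B (e i) (e j)) {p m : ι → ℝ}
    (hp : ∀ i, 0 ≤ p i) (hm : ∀ i, 0 ≤ m i) (hpm : ∀ i, p i * m i = 0) :
    0 ≤ B (∑ i, p i • e i) (∑ j, m j • e j) := by
  simp only [map_sum, map_smul, LinearMap.sum_apply, LinearMap.smul_apply, smul_eq_mul,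
    mul_sum]
  refine sum_nonneg fun j _ => sum_nonneg fun i _ => ?_
  rcases eq_or_ne i j with rfl | hne
  · rw [mul_left_comm, ← mul_assoc, hpm, zero_mul]
  · exact mul_nonneg (hm j) (mul_nonneg (hp i) (hij i j hne))

lemma eq_zero_of_apply_sum_smul_self_nonneg
    (hneg : ∀ c : ι → ℝ, (∀ i, 0 ≤ c i) → (∃ i, c i ≠ 0) →
      B (∑ i, c i • e i) (∑ i, c i • e i) < 0)
    {c : ι → ℝ} (hc : ∀ i, 0 ≤ c i) (hB : 0 ≤ B (∑ i, c i • e i) (∑ i, c i • e i)) :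
    c = 0 := by
  by_contra hne
  obtain ⟨i, hi⟩ := Function.ne_iff.1 hne
  exact (hneg c hc ⟨i, hi⟩).not_ge hB

end

theorem stmt_4_general {V : Type*} [AddCommGroup V] [Module ℝ V]
    (B : V →ₗ[ℝ] V →ₗ[ℝ] ℝ)
    {n : ℕ} (e : Fin n → V)
    (hij : ∀ i j, i ≠ j → 0 ≤ B (e i) (e j))
    (hneg : ∀ c : Fin n → ℝ, (∀ i, 0 ≤ c i) → (∃ i, c i ≠ 0) →
      B (∑ i, c i • e i) (∑ i, c i • e i) < 0) :
    LinearIndependent ℝ e := by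
  rw [Fintype.linearIndependent_iff]
  intro c hc
  have hsplit : ∑ i, c⁺ i • e i = ∑ i, c⁻ i • e i := by
    rw [← sub_eq_zero, ← sum_sub_distrib, ← hc]
    congr 1 with i
    rw [← sub_smul, ← Pi.sub_apply, posPart_sub_negPart]
  have hcross : 0 ≤ B (∑ i, c⁺ i • e i) (∑ i, c⁻ i • e i) :=
    apply_sum_smul_nonneg_of_mul_eq_zero B hij (fun i => posPart_nonneg (c i))
      (fun i => negPart_nonneg (c i)) fun i => Real.posPart_mul_negPart (c i)
  have hc_pos : c⁺ = 0 := eq_zero_of_apply_sum_smul_self_nonneg B hneg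
    (fun i => posPart_nonneg (c i)) (by rwa [← hsplit] at hcross)
  have hc_neg : c⁻ = 0 := eq_zero_of_apply_sum_smul_self_nonneg B hneg
    (fun i => negPart_nonneg (c i)) (by rwa [hsplit] at hcross)
  intro i
  rw [← posPart_sub_negPart c, hc_pos, hc_neg, sub_zero, Pi.zero_apply]

/-- If the symmetric bilinear form is negative definite on the cone
generated by `e 1, ..., e n` (every nonzero nonnegative combination has negative
square) and `(e i, e j) ≥ 0` for `i ≠ j`, then the `e i` are linearly independent. -/
theorem stmt_4 {V : Type*} [AddCommGroup V] [Module ℝ V]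
    (B : V →ₗ[ℝ] V →ₗ[ℝ] ℝ) (hsymm : ∀ x y, B x y = B y x)
    {n : ℕ} (e : Fin n → V)
    (hij : ∀ i j, i ≠ j → 0 ≤ B (e i) (e j))
    (hneg : ∀ c : Fin n → ℝ, (∀ i, 0 ≤ c i) → (∃ i, c i ≠ 0) →
      B (∑ i, c i • e i) (∑ i, c i • e i) < 0) :
    LinearIndependent ℝ e :=
  stmt_4_general B e hij hneg
end
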